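/- Fix α ≥ 2. For every s ∈ [−1,1], the quantity r_max(s) = sup{r ≥ 0 : (s,r) ∈ D_feas} is attained (i.e., (s, r_max(s)) ∈ D_feas) and satisfies the boundary equation α·c_d(s, r_max(s)) = r_max(s)². Moreover, r_max(0) > 0. -/

import Mathlib

/-!
For `|s| ≤ 1` the map `r ↦ c_d(s,r)` is continuous (dominated convergence), vanishes at `r = 0`,
and grows like `r²`: pointwise `min{|q| - |r g + s q|, 0}² ≥ r² g² - 2r (q² + g²)`, so
`c_d(s,r) ≥ r² - 4r`. Hence for `α > 1` the feasible radii form a compact set containing `0`; its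
maximum is attained, and there the constraint is active, since a strict inequality would persist
slightly to the right. At `s = 0`, `c_d(0,r) = r² E[min{|q|/r - |g|, 0}²] = o(r²)` as `r → 0⁺`
(dominated convergence, using `q ≠ 0` a.s.), so small positive radii are feasible.
-/

open MeasureTheory ProbabilityTheory Filter Real

noncomputable section

/-- The standard Gaussian measure `N(0,1)` on `ℝ`. -/
def stdGaussian : Measure ℝ := gaussianReal 0 1

instance : IsProbabilityMeasure stdGaussian :=
  inferInstanceAs (IsProbabilityMeasure (gaussianReal 0 1))

/-- `c_d(s,r) = E[(min{|q| - |r g + s q|, 0})²]` for independent standard Gaussians `q, g`. -/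
def cd (s r : ℝ) : ℝ :=
  ∫ p : ℝ × ℝ, (min (|p.1| - |r * p.2 + s * p.1|) 0) ^ 2
    ∂(stdGaussian.prod stdGaussian)

/-- The deterministic feasibility set `D_feas`. -/
def Dfeas (α : ℝ) : Set (ℝ × ℝ) := {p | 0 ≤ p.2 ∧ α * cd p.1 p.2 ≤ p.2 ^ 2}

/-- The maximum radius `r_max(s) = sup {r : (s,r) ∈ D_feas}`. -/
def rmax (α s : ℝ) : ℝ := sSup {r : ℝ | (s, r) ∈ Dfeas α}

open scoped Topology

local notation "γ₂" => stdGaussian.prod stdGaussian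

lemma integrable_sq_stdGaussian : Integrable (fun x : ℝ => x ^ 2) stdGaussian :=
  (memLp_id_gaussianReal 2).integrable_sq

lemma integral_sq_stdGaussian : ∫ x, x ^ 2 ∂stdGaussian = 1 := by
  have h := variance_of_integral_eq_zero (X := fun x : ℝ => x) (μ := gaussianReal 0 1)
    aemeasurable_id integral_id_gaussianReal
  rw [variance_fun_id_gaussianReal] at h
  exact_mod_cast h.symm

lemma integrable_fst_sq : Integrable (fun p : ℝ × ℝ => p.1 ^ 2) γ₂ :=
  integrable_sq_stdGaussian.comp_fst _

lemma integrable_snd_sq : Integrable (fun p : ℝ × ℝ => p.2 ^ 2) γ₂ :=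
  integrable_sq_stdGaussian.comp_snd _

lemma integral_fst_sq : ∫ p, p.1 ^ 2 ∂γ₂ = 1 := by
  simp [integral_fun_fst (fun x : ℝ => x ^ 2), integral_sq_stdGaussian]

lemma integral_snd_sq : ∫ p, p.2 ^ 2 ∂γ₂ = 1 := by
  simp [integral_fun_snd (fun x : ℝ => x ^ 2), integral_sq_stdGaussian]

lemma ae_fst_ne_zero : ∀ᵐ p ∂γ₂, p.1 ≠ 0 := by
  have h0 : stdGaussian {0} = 0 := gaussianReal_absolutelyContinuous 0 one_ne_zero (by simp)
  have h : γ₂ (Prod.fst ⁻¹' {0}) = 0 := by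
    rw [← Set.prod_univ, Measure.prod_prod, h0, zero_mul]
  rw [ae_iff]
  simp only [ne_eq, not_not]
  exact h

lemma min_sub_abs_sq_le_sq (x y : ℝ) : (min (|x| - |y|) 0) ^ 2 ≤ y ^ 2 := by
  rcases le_total (|x| - |y|) 0 with h | h
  · rw [min_eq_left h, ← sq_abs y]
    nlinarith [abs_nonneg x]
  · simp [min_eq_right h, sq_nonneg]

lemma cd_integrand_le (s r : ℝ) (p : ℝ × ℝ) :
    (min (|p.1| - |r * p.2 + s * p.1|) 0) ^ 2 ≤ 2 * r ^ 2 * p.2 ^ 2 + 2 * s ^ 2 * p.1 ^ 2 := by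
  nlinarith [min_sub_abs_sq_le_sq p.1 (r * p.2 + s * p.1), sq_nonneg (r * p.2 - s * p.1)]

lemma integrable_cd_integrand (s r : ℝ) :
    Integrable (fun p : ℝ × ℝ => (min (|p.1| - |r * p.2 + s * p.1|) 0) ^ 2) γ₂ := by
  refine Integrable.mono' ((integrable_snd_sq.const_mul (2 * r ^ 2)).add
    (integrable_fst_sq.const_mul (2 * s ^ 2))) (by fun_prop) (.of_forall fun p => ?_)
  rw [Real.norm_of_nonneg (sq_nonneg _)]
  exact cd_integrand_le s r p

lemma cd_zero_right {s : ℝ} (hs : |s| ≤ 1) : cd s 0 = 0 := by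
  have h : ∀ p : ℝ × ℝ, (min (|p.1| - |0 * p.2 + s * p.1|) 0) ^ 2 = 0 := fun p => by
    rw [zero_mul, zero_add, abs_mul, min_eq_right (by nlinarith [abs_nonneg p.1])]
    norm_num
  simp only [cd, h, integral_zero]

lemma continuous_cd (s : ℝ) : Continuous (cd s) := by
  refine continuous_iff_continuousAt.mpr fun r₀ => continuousAt_of_dominated
    (bound := fun p : ℝ × ℝ => 2 * (|r₀| + 1) ^ 2 * p.2 ^ 2 + 2 * s ^ 2 * p.1 ^ 2)
    (.of_forall fun r => (integrable_cd_integrand s r).aestronglyMeasurable) ?_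
    ((integrable_snd_sq.const_mul _).add (integrable_fst_sq.const_mul _))
    (.of_forall fun p => by fun_prop)
  filter_upwards [Metric.ball_mem_nhds r₀ one_pos] with r hr
  refine .of_forall fun p => ?_
  have hr' : |r| ≤ |r₀| + 1 := by
    have := abs_sub_abs_le_abs_sub r r₀
    rw [Metric.mem_ball, Real.dist_eq] at hr
    linarith
  have hsq : r ^ 2 ≤ (|r₀| + 1) ^ 2 :=
    sq_le_sq' (by linarith [neg_abs_le r]) ((le_abs_self r).trans hr')
  rw [Real.norm_of_nonneg (sq_nonneg _)]
  nlinarith [cd_integrand_le s r p, sq_nonneg p.2]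

lemma cd_integrand_ge {s r : ℝ} (hs : |s| ≤ 1) (hr : 0 ≤ r) (p : ℝ × ℝ) :
    r ^ 2 * p.2 ^ 2 - 2 * r * p.1 ^ 2 - 2 * r * p.2 ^ 2 ≤
      (min (|p.1| - |r * p.2 + s * p.1|) 0) ^ 2 := by
  obtain ⟨q, g⟩ := p
  have hqg : 2 * r * (|q| * |g|) ≤ r * (q ^ 2 + g ^ 2) := by
    nlinarith [mul_nonneg hr (sq_nonneg (|q| - |g|)), sq_abs q, sq_abs g]
  have hsq_le : |s * q| ≤ |q| := by
    rw [abs_mul]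
    exact mul_le_of_le_one_left (abs_nonneg q) hs
  have hy : r * |g| - |q| ≤ |r * g + s * q| := by
    have := abs_sub (r * g + s * q) (s * q)
    rw [add_sub_cancel_right, abs_mul r, abs_of_nonneg hr] at this
    linarith
  -- If `r|g| ≤ 2|q|` the left side is `≤ 0`; otherwise `|q| - |r g + s q| ≤ 2|q| - r|g| < 0`.
  rcases le_or_gt (r * |g|) (2 * |q|) with hle | hgt
  · nlinarith [sq_nonneg (min (|q| - |r * g + s * q|) 0), mul_le_mul_of_nonneg_left hle
      (mul_nonneg hr (abs_nonneg g)), sq_abs g]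
  · rw [min_eq_left (by linarith)]
    nlinarith [sq_abs q, sq_abs g]

lemma sq_sub_four_mul_le_cd {s r : ℝ} (hs : |s| ≤ 1) (hr : 0 ≤ r) : r ^ 2 - 4 * r ≤ cd s r := by
  have hsnd := integrable_snd_sq.const_mul (r ^ 2)
  have hfst := integrable_fst_sq.const_mul (2 * r)
  have hsnd' := integrable_snd_sq.const_mul (2 * r)
  have hdiff : Integrable (fun p : ℝ × ℝ => r ^ 2 * p.2 ^ 2 - 2 * r * p.1 ^ 2) γ₂ := hsnd.sub hfst
  have hlow : ∫ p, r ^ 2 * p.2 ^ 2 - 2 * r * p.1 ^ 2 - 2 * r * p.2 ^ 2 ∂γ₂ = r ^ 2 - 4 * r := by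
    rw [integral_sub hdiff hsnd', integral_sub hsnd hfst, integral_const_mul,
      integral_const_mul, integral_const_mul, integral_fst_sq, integral_snd_sq]
    ring
  rw [← hlow]
  exact integral_mono (hdiff.sub hsnd') (integrable_cd_integrand s r)
    (cd_integrand_ge hs hr)

lemma cd_zero_left_div_sq {r : ℝ} (hr : 0 < r) :
    cd 0 r / r ^ 2 = ∫ p, (min (|p.1| / r - |p.2|) 0) ^ 2 ∂γ₂ := by
  rw [cd, div_eq_iff (by positivity), ← integral_mul_const]
  congr 1 with p
  have h : |p.1| - |r * p.2 + 0 * p.1| = r * (|p.1| / r - |p.2|) := by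
    rw [zero_mul, add_zero, abs_mul, abs_of_pos hr]
    field_simp
  have hmin := mul_min_of_nonneg (|p.1| / r - |p.2|) 0 hr.le
  rw [mul_zero] at hmin
  rw [h, ← hmin]
  ring

lemma tendsto_cd_zero_left_div_sq :
    Tendsto (fun r => cd 0 r / r ^ 2) (𝓝[>] 0) (𝓝 0) := by
  have hlim : Tendsto (fun r => ∫ p, (min (|p.1| / r - |p.2|) 0) ^ 2 ∂γ₂) (𝓝[>] 0)
      (𝓝 (∫ _, (0 : ℝ) ∂γ₂)) := by
    refine tendsto_integral_filter_of_dominated_convergence (fun p => p.2 ^ 2)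
      (.of_forall fun r => by fun_prop) ?_ integrable_snd_sq ?_
    · filter_upwards [self_mem_nhdsWithin] with r (hr : 0 < r)
      refine .of_forall fun p => ?_
      rw [Real.norm_of_nonneg (sq_nonneg _), ← abs_of_pos hr, ← abs_div]
      exact min_sub_abs_sq_le_sq _ _
    · filter_upwards [ae_fst_ne_zero] with p hp
      have h : Tendsto (fun r => |p.1| / r) (𝓝[>] 0) atTop := by
        simpa only [div_eq_mul_inv] using
          tendsto_inv_nhdsGT_zero.const_mul_atTop (abs_pos.mpr hp)
      refine tendsto_const_nhds.congr' ?_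
      filter_upwards [h.eventually_ge_atTop |p.2|] with r hr
      rw [min_eq_right (by linarith)]
      norm_num
  rw [integral_zero] at hlim
  exact hlim.congr' (eventually_nhdsWithin_of_forall fun r hr => (cd_zero_left_div_sq hr).symm)

lemma exists_pos_mul_cd_zero_left_le (α : ℝ) : ∃ r, 0 < r ∧ α * cd 0 r ≤ r ^ 2 := by
  have h : ∀ᶠ r in 𝓝[>] (0 : ℝ), α * (cd 0 r / r ^ 2) < 1 :=
    (tendsto_cd_zero_left_div_sq.const_mul α).eventually_lt_const (by norm_num)
  obtain ⟨r, hr, hr0⟩ := (h.and self_mem_nhdsWithin).exists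
  refine ⟨r, hr0, ?_⟩
  rw [← mul_div_assoc, div_lt_one (by positivity)] at hr
  exact hr.le

lemma eq_of_isGreatest_setOf_nonneg_le {f g : ℝ → ℝ} (hf : Continuous f) (hg : Continuous g)
    {R : ℝ} (hR : IsGreatest {r | 0 ≤ r ∧ f r ≤ g r} R) : f R = g R := by
  obtain ⟨⟨hR₀, hle⟩, hmax⟩ := hR
  refine hle.antisymm (not_lt.mp fun hlt => ?_)
  have hnear : ∀ᶠ r in 𝓝[>] R, f r < g r :=
    ((hf.tendsto R).mono_left nhdsWithin_le_nhds).eventually_lt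
      ((hg.tendsto R).mono_left nhdsWithin_le_nhds) hlt
  obtain ⟨r, hr, hRr⟩ := (hnear.and self_mem_nhdsWithin).exists
  exact (hmax ⟨hR₀.trans (le_of_lt hRr), hr.le⟩).not_gt hRr

lemma isClosed_setOf_mem_Dfeas (α s : ℝ) : IsClosed {r | (s, r) ∈ Dfeas α} :=
  (isClosed_le continuous_const continuous_id).inter
    (isClosed_le (continuous_const.mul (continuous_cd s)) (continuous_pow 2))

lemma bddAbove_setOf_mem_Dfeas {α s : ℝ} (hα : 1 < α) (hs : |s| ≤ 1) :
    BddAbove {r | (s, r) ∈ Dfeas α} := by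
  refine ⟨4 * α / (α - 1), fun r ⟨hr, hfeas⟩ => ?_⟩
  have hlow := mul_le_mul_of_nonneg_left (sq_sub_four_mul_le_cd hs hr) (by linarith : 0 ≤ α)
  rw [le_div_iff₀ (by linarith)]
  by_contra! h
  nlinarith [mul_lt_mul_of_pos_left h (by nlinarith : 0 < r)]

lemma isGreatest_rmax {α s : ℝ} (hα : 1 < α) (hs : |s| ≤ 1) :
    IsGreatest {r | (s, r) ∈ Dfeas α} (rmax α s) :=
  (isClosed_setOf_mem_Dfeas α s).isGreatest_csSup ⟨0, le_rfl, by simp [cd_zero_right hs]⟩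
    (bddAbove_setOf_mem_Dfeas hα hs)

lemma rmax_zero_pos {α : ℝ} (hα : 1 < α) : 0 < rmax α 0 := by
  obtain ⟨r, hr, hfeas⟩ := exists_pos_mul_cd_zero_left_le α
  exact hr.trans_le ((isGreatest_rmax hα (by simp)).2 ⟨hr.le, hfeas⟩)

/-- **Lemma (P.3).** For `α ≥ 2` and every `s ∈ [-1,1]`, the supremum `r_max(s)` is attained
and satisfies `α·c_d(s, r_max(s)) = r_max(s)²`; moreover `r_max(0) > 0`. -/
theorem stmt3 (α : ℝ) (hα : 2 ≤ α) :
    (∀ s ∈ Set.Icc (-1 : ℝ) 1,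
      (s, rmax α s) ∈ Dfeas α ∧ α * cd s (rmax α s) = rmax α s ^ 2) ∧
    0 < rmax α 0 := by
  have hα₁ : 1 < α := by linarith
  refine ⟨fun s hs => ?_, rmax_zero_pos hα₁⟩
  have hR := isGreatest_rmax hα₁ (abs_le.mpr hs)
  exact ⟨hR.1, eq_of_isGreatest_setOf_nonneg_le (continuous_const.mul (continuous_cd s))
    (continuous_pow 2) hR⟩
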